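/- arXiv:2002.08405 — 6 statements merged into one kernel-verified Lean document; each statement's English description precedes it below -/
import Mathlib

section
/- Let a < b be real numbers and let X_1, ..., X_n be i.i.d. random variables taking values in [a,b] with common mean μ satisfying l ≤ μ ≤ u, where a ≤ l ≤ u ≤ b. Suppose l ≥ (a+b)/2. Then for every ε ∈ [0, u−l], the empirical mean μ̂_n = (1/n)∑_{i=1}^n X_i satisfies P(μ̂_n − μ ≥ ε) ≤ exp(−n ε² / (2 (l−a)(b−l))). -/
/-!
By the Chernoff bound it suffices to bound the moment generating function of each `X i` at
`t ≥ 0`. As in the proof of Hoeffding's lemma, the cumulant generating function of `X i - μ`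
at `t` is `t² / 2` times the variance of `X i` under the law tilted by `exp (u X i)`, for some
`u ∈ (0, t)`. Tilting by `u ≥ 0` can only raise the mean, so the tilted mean `m` satisfies
`m ≥ μ ≥ (a + b) / 2`, and the Bhatia–Davis inequality bounds the tilted variance by
`(b - m) (m - a) ≤ (b - μ) (μ - a) ≤ (b - l) (l - a)`. Optimising the Chernoff bound at
`t = ε / ((l - a) (b - l))` gives the claim.
-/

open MeasureTheory ProbabilityTheory Real

namespace ProbabilityTheory

variable {Ω : Type*} [MeasurableSpace Ω] {μ : Measure Ω} {X : Ω → ℝ}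

lemma monotone_deriv_cgf (h : ∀ t, Integrable (fun ω ↦ exp (t * X ω)) μ) :
    Monotone (deriv (cgf X μ)) := by
  have hs (t : ℝ) : t ∈ interior (integrableExpSet X μ) := by simp [h, integrableExpSet]
  refine monotone_of_deriv_nonneg (fun t ↦ (analyticAt_cgf (hs t)).deriv.differentiableAt)
    fun t ↦ ?_
  have hvar := variance_tilted_mul (hs t)
  rw [iteratedDeriv_succ, iteratedDeriv_one] at hvar
  exact hvar ▸ variance_nonneg _ _

lemma integral_le_integral_tilted_mul_self [IsProbabilityMeasure μ]
    (h : ∀ t, Integrable (fun ω ↦ exp (t * X ω)) μ) {t : ℝ} (ht : 0 ≤ t) :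
    μ[X] ≤ (μ.tilted (t * X ·))[X] := by
  have hs (t : ℝ) : t ∈ interior (integrableExpSet X μ) := by simp [h, integrableExpSet]
  calc μ[X] = deriv (cgf X μ) 0 := by simp [deriv_cgf_zero (hs 0)]
    _ ≤ deriv (cgf X μ) t := monotone_deriv_cgf h ht
    _ = (μ.tilted (t * X ·))[X] := (integral_tilted_mul_self (hs t)).symm

lemma mgf_le_of_mem_Icc_of_integral_eq_zero_of_add_nonpos [IsProbabilityMeasure μ]
    {a b t : ℝ} (hm : AEMeasurable X μ) (hb : ∀ᵐ ω ∂μ, X ω ∈ Set.Icc a b)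
    (hc : μ[X] = 0) (hab : a + b ≤ 0) (ht : 0 < t) :
    mgf X μ t ≤ exp (b * -a * t ^ 2 / 2) := by
  have hi (u : ℝ) : Integrable (fun ω ↦ exp (u * X ω)) μ :=
    integrable_exp_mul_of_mem_Icc hm hb
  have hs : Set.Icc 0 t ⊆ interior (integrableExpSet X μ) := by simp [hi, integrableExpSet]
  obtain ⟨u, hu, hcgf⟩ := exists_cgf_eq_iteratedDeriv_two_cgf_mul ht hc hs
  rw [← exp_cgf (hi t), exp_le_exp, hcgf]
  gcongr
  have : IsProbabilityMeasure (μ.tilted (u * X ·)) := isProbabilityMeasure_tilted (hi u)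
  have hmean : 0 ≤ (μ.tilted (u * X ·))[X] :=
    hc ▸ integral_le_integral_tilted_mul_self hi hu.1.le
  calc iteratedDeriv 2 (cgf X μ) u = Var[X; μ.tilted (u * X ·)] :=
        (variance_tilted_mul (hs (Set.mem_Icc_of_Ioo hu))).symm
    _ ≤ (b - (μ.tilted (u * X ·))[X]) * ((μ.tilted (u * X ·))[X] - a) :=
        variance_le_sub_mul_sub ((tilted_absolutelyContinuous μ (u * X ·)) hb)
          (hm.mono_ac (tilted_absolutelyContinuous μ (u * X ·)))
    _ ≤ b * -a := by nlinarith

lemma mgf_le_of_mem_Icc_of_midpoint_le_integral [IsProbabilityMeasure μ] {a b t : ℝ}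
    (hm : AEMeasurable X μ) (hb : ∀ᵐ ω ∂μ, X ω ∈ Set.Icc a b)
    (hmid : (a + b) / 2 ≤ μ[X]) (ht : 0 ≤ t) :
    mgf X μ t ≤ exp (t * μ[X] + (b - μ[X]) * (μ[X] - a) * t ^ 2 / 2) := by
  rcases ht.eq_or_lt with rfl | ht
  · simp
  set m := μ[X]
  have hcentered : mgf (fun ω ↦ X ω - m) μ t ≤ exp ((b - m) * -(a - m) * t ^ 2 / 2) := by
    refine mgf_le_of_mem_Icc_of_integral_eq_zero_of_add_nonpos (hm.sub_const m) ?_ ?_ ?_ ht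
    · filter_upwards [hb] with ω hω
      exact ⟨sub_le_sub_right hω.1 m, sub_le_sub_right hω.2 m⟩
    · rw [integral_sub (Integrable.of_mem_Icc a b hm hb) (integrable_const m)]
      simp [m]
    · linarith
  calc mgf X μ t = mgf (fun ω ↦ X ω - m) μ t * exp (t * m) := by
        rw [← mgf_add_const]; simp
    _ ≤ exp ((b - m) * -(a - m) * t ^ 2 / 2) * exp (t * m) := by gcongr
    _ = exp (t * m + (b - m) * (m - a) * t ^ 2 / 2) := by rw [← exp_add]; ring_nf

lemma measureReal_sum_ge_le_of_iIndepFun_of_mgf_le [IsProbabilityMeasure μ] {ι : Type*}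
    [Fintype ι] {X : ι → Ω → ℝ} (hindep : iIndepFun X μ) (hmeas : ∀ i, Measurable (X i))
    {t c : ℝ} (ht : 0 ≤ t) (hint : ∀ i, Integrable (fun ω ↦ exp (t * X i ω)) μ)
    (hmgf : ∀ i, mgf (X i) μ t ≤ exp c) (x : ℝ) :
    μ.real {ω | x ≤ ∑ i, X i ω} ≤ exp (-t * x + Fintype.card ι * c) := by
  calc μ.real {ω | x ≤ ∑ i, X i ω} = μ.real {ω | x ≤ (∑ i, X i) ω} := by
        simp only [Finset.sum_apply]
    _ ≤ exp (-t * x) * mgf (∑ i, X i) μ t :=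
        measure_ge_le_exp_mul_mgf x ht (hindep.integrable_exp_mul_sum hmeas fun i _ ↦ hint i)
    _ ≤ exp (-t * x) * ∏ _i : ι, exp c := by
        rw [hindep.mgf_sum hmeas]
        gcongr with i
        · exact fun i _ ↦ mgf_nonneg
        · exact hmgf i
    _ = exp (-t * x + Fintype.card ι * c) := by
        rw [Finset.prod_const, ← exp_nat_mul, ← exp_add, Finset.card_univ]

end ProbabilityTheory

theorem upper_tail_bound_high_lower_bound_general
    {Ω : Type*} [MeasurableSpace Ω] (P : Measure Ω) [IsProbabilityMeasure P]
    (a b l u μ : ℝ)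
    (hl : (a + b) / 2 ≤ l)
    (n : ℕ) (hn : 0 < n) (X : Fin n → Ω → ℝ)
    (hmeas : ∀ i, Measurable (X i))
    (hindep : ProbabilityTheory.iIndepFun X P)
    (hbdd : ∀ i, ∀ᵐ ω ∂P, X i ω ∈ Set.Icc a b)
    (hmean : ∀ i, ∫ ω, X i ω ∂P = μ)
    (hlμ : l ≤ μ)
    (ε : ℝ) (hε : ε ∈ Set.Icc 0 (u - l)) :
    (P {ω | (∑ i, X i ω) / n - μ ≥ ε}).toReal ≤
      Real.exp (-((n : ℝ) * ε ^ 2) / (2 * (l - a) * (b - l))) := by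
  set V := (l - a) * (b - l)
  rw [mul_assoc]
  rcases le_or_gt V 0 with hV | hV
  · calc (P {ω | (∑ i, X i ω) / n - μ ≥ ε}).toReal ≤ 1 := measureReal_le_one
      _ ≤ exp (-(n * ε ^ 2) / (2 * V)) :=
        one_le_exp (div_nonneg_of_nonpos (neg_nonpos.2 (by positivity)) (by linarith))
  set t := ε / V
  have ht : 0 ≤ t := div_nonneg hε.1 hV.le
  have hvar : (b - μ) * (μ - a) ≤ V := by
    nlinarith [mul_nonneg (sub_nonneg.2 hlμ) (by linarith : 0 ≤ μ + l - (a + b))]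
  have hmgf (i : Fin n) : mgf (X i) P t ≤ exp (t * μ + V * t ^ 2 / 2) := by
    refine (hmean i ▸ mgf_le_of_mem_Icc_of_midpoint_le_integral (hmeas i).aemeasurable (hbdd i)
      (by linarith [hmean i]) ht).trans ?_
    gcongr
  have hset : {ω | (∑ i, X i ω) / n - μ ≥ ε} = {ω | n * (μ + ε) ≤ ∑ i, X i ω} := by
    ext ω
    rw [Set.mem_ofPred_eq, Set.mem_ofPred_eq, ge_iff_le, le_sub_iff_add_le,
      le_div_iff₀ (Nat.cast_pos.2 hn), add_comm, mul_comm]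
  calc (P {ω | (∑ i, X i ω) / n - μ ≥ ε}).toReal
      = P.real {ω | n * (μ + ε) ≤ ∑ i, X i ω} := by rw [hset]; rfl
    _ ≤ exp (-t * (n * (μ + ε)) + Fintype.card (Fin n) * (t * μ + V * t ^ 2 / 2)) :=
        measureReal_sum_ge_le_of_iIndepFun_of_mgf_le hindep hmeas ht
          (fun i ↦ integrable_exp_mul_of_mem_Icc (hmeas i).aemeasurable (hbdd i)) hmgf _
    _ = exp (-(n * ε ^ 2) / (2 * V)) := by
        rw [Fintype.card_fin]
        congr 1
        simp only [t]
        field_simp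
        ring

/-- Improved Chernoff-Hoeffding upper-tail bound when `l ≥ (a+b)/2`. -/
theorem upper_tail_bound_high_lower_bound
    {Ω : Type*} [MeasurableSpace Ω] (P : Measure Ω) [IsProbabilityMeasure P]
    (a b l u μ : ℝ) (hab : a < b) (hal : a ≤ l) (hlu : l ≤ u) (hub : u ≤ b)
    (hl : (a + b) / 2 ≤ l)
    (n : ℕ) (hn : 0 < n) (X : Fin n → Ω → ℝ)
    (hmeas : ∀ i, Measurable (X i))
    (hindep : ProbabilityTheory.iIndepFun X P)
    (hident : ∀ i j, ProbabilityTheory.IdentDistrib (X i) (X j) P P)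
    (hbdd : ∀ i, ∀ᵐ ω ∂P, X i ω ∈ Set.Icc a b)
    (hmean : ∀ i, ∫ ω, X i ω ∂P = μ)
    (hlμ : l ≤ μ) (hμu : μ ≤ u)
    (ε : ℝ) (hε : ε ∈ Set.Icc 0 (u - l)) :
    (P {ω | (∑ i, X i ω) / n - μ ≥ ε}).toReal ≤
      Real.exp (-((n : ℝ) * ε ^ 2) / (2 * (l - a) * (b - l))) :=
  upper_tail_bound_high_lower_bound_general P a b l u μ hl n hn X hmeas hindep hbdd hmean hlμ ε hε
end

section
/- Let a < b be real numbers and let X_1, ..., X_n be i.i.d. random variables taking values in [a,b] with common mean μ satisfying l ≤ μ ≤ u, where a ≤ l ≤ u ≤ b. Suppose u ≤ (a+b)/2. Then for every ε ∈ [0, u−l], the empirical mean μ̂_n satisfies P(μ̂_n − μ ≤ −ε) ≤ exp(−n ε² / (2 (u−a)(b−u))). -/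
open MeasureTheory ProbabilityTheory Real

/-!
Chernoff's method with a negative parameter `t`. By convexity of `exp`, `E e^{tY}` for `Y ∈ [a, b]`
with mean `μ` is at most the same quantity for the two-point law on `{a, b}` with mean `μ`, namely
`e^{ta} (1 - p + p e^s)` with `p = (μ - a)/(b - a)` and `s = t (b - a)`. For `s ≤ 0` the
exponentially tilted Bernoulli(`p`) law has success probability in `[0, p]`, and
`p ≤ q = (u - a)/(b - a) ≤ 1/2`, so the second derivative of the Bernoulli cumulant generating
function stays below `q (1 - q)`; a second-order Taylor bound then gives
`E e^{tY} ≤ exp (t μ + t² (u - a)(b - u)/2)`. Independence multiplies these bounds, and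
`t = -ε / ((u - a)(b - u))` optimises the resulting Chernoff bound.
-/

lemma monotoneOn_Iic_of_hasDerivAt_nonneg {f f' : ℝ → ℝ} {c : ℝ}
    (hf : ∀ x, HasDerivAt f (f' x) x) (hf' : ∀ x ≤ c, 0 ≤ f' x) :
    MonotoneOn f (Set.Iic c) :=
  monotoneOn_of_hasDerivWithinAt_nonneg (convex_Iic c)
    (fun x _ => (hf x).continuousAt.continuousWithinAt) (fun x _ => (hf x).hasDerivWithinAt)
    (fun x hx => hf' x (by simpa using interior_subset hx))

section Bernoulli

variable {p : ℝ}

noncomputable def bernoulliTilt (p x : ℝ) : ℝ := p * exp x / (1 - p + p * exp x)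

lemma one_sub_add_mul_exp_pos (hp0 : 0 ≤ p) (hp1 : p ≤ 1) (x : ℝ) : 0 < 1 - p + p * exp x := by
  rcases hp0.eq_or_lt with rfl | hp
  · simp
  · exact add_pos_of_nonneg_of_pos (by linarith) (mul_pos hp (exp_pos x))

@[simp]
lemma bernoulliTilt_zero : bernoulliTilt p 0 = p := by
  simp [bernoulliTilt]

lemma hasDerivAt_log_one_sub_add_mul_exp (hp0 : 0 ≤ p) (hp1 : p ≤ 1) (x : ℝ) :
    HasDerivAt (fun x => log (1 - p + p * exp x)) (bernoulliTilt p x) x :=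
  (((hasDerivAt_exp x).const_mul p).const_add (1 - p)).log
    (one_sub_add_mul_exp_pos hp0 hp1 x).ne'

lemma hasDerivAt_bernoulliTilt (hp0 : 0 ≤ p) (hp1 : p ≤ 1) (x : ℝ) :
    HasDerivAt (bernoulliTilt p) (bernoulliTilt p x * (1 - bernoulliTilt p x)) x := by
  have hD := (one_sub_add_mul_exp_pos hp0 hp1 x).ne'
  refine (((hasDerivAt_exp x).const_mul p).div
    (((hasDerivAt_exp x).const_mul p).const_add (1 - p)) hD).congr_deriv ?_
  simp only [bernoulliTilt]
  field_simp

lemma bernoulliTilt_mem_Icc (hp0 : 0 ≤ p) (hp1 : p ≤ 1) {x : ℝ} (hx : x ≤ 0) :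
    bernoulliTilt p x ∈ Set.Icc 0 p := by
  have hD := one_sub_add_mul_exp_pos hp0 hp1 x
  refine ⟨by unfold bernoulliTilt; positivity, ?_⟩
  rw [bernoulliTilt, div_le_iff₀ hD]
  nlinarith [mul_nonneg (mul_nonneg hp0 (sub_nonneg.2 hp1)) (sub_nonneg.2 (exp_le_one_iff.2 hx))]

lemma log_one_sub_add_mul_exp_le {q s : ℝ} (hp0 : 0 ≤ p) (hpq : p ≤ q) (hq : q ≤ 1 / 2)
    (hs : s ≤ 0) : log (1 - p + p * exp s) ≤ s * p + s ^ 2 * (q * (1 - q)) / 2 := by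
  have hp1 : p ≤ 1 := by linarith
  have htilt_ge : ∀ x ≤ (0 : ℝ), p + x * (q * (1 - q)) ≤ bernoulliTilt p x := by
    intro x hx
    have hmono := monotoneOn_Iic_of_hasDerivAt_nonneg
      (f := fun x => p + x * (q * (1 - q)) - bernoulliTilt p x)
      (fun x => (((hasDerivAt_id x).mul_const _).const_add p).sub
        (hasDerivAt_bernoulliTilt hp0 hp1 x)) (c := 0) (fun y hy => ?_)
      hx Set.self_mem_Iic hx
    · simp only [bernoulliTilt_zero] at hmono
      linarith
    obtain ⟨h0, hp⟩ := bernoulliTilt_mem_Icc hp0 hp1 hy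
    simp only [one_mul]
    nlinarith [mul_nonneg (sub_nonneg.2 (hp.trans hpq))
      (by linarith : 0 ≤ 1 - q - bernoulliTilt p y)]
  have hmono := monotoneOn_Iic_of_hasDerivAt_nonneg
    (f := fun x => log (1 - p + p * exp x) - x * p - x ^ 2 * (q * (1 - q)) / 2)
    (f' := fun x => bernoulliTilt p x - p - x * (q * (1 - q)))
    (fun x => ?_) (c := 0) (fun y hy => ?_) hs Set.self_mem_Iic hs
  · simpa [sub_nonpos, sub_sub] using hmono
  · refine (((hasDerivAt_log_one_sub_add_mul_exp hp0 hp1 x).sub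
      ((hasDerivAt_id' x).mul_const p)).sub
      (((hasDerivAt_pow 2 x).mul_const (q * (1 - q))).div_const 2)).congr_deriv ?_
    ring
  · linarith [htilt_ge y hy]

end Bernoulli

lemma exp_mul_le_of_mem_Icc {a b y : ℝ} (hab : a < b) (hy : y ∈ Set.Icc a b) (t : ℝ) :
    exp (t * y) ≤ ((b - y) * exp (t * a) + (y - a) * exp (t * b)) / (b - a) := by
  have hba : 0 < b - a := by linarith
  have h := convexOn_exp.2 (Set.mem_univ (t * a)) (Set.mem_univ (t * b))
    (div_nonneg (sub_nonneg.2 hy.2) hba.le) (div_nonneg (sub_nonneg.2 hy.1) hba.le)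
    (by field_simp; ring)
  simp only [smul_eq_mul] at h
  calc exp (t * y) = exp ((b - y) / (b - a) * (t * a) + (y - a) / (b - a) * (t * b)) := by
        congr 1
        field_simp
        ring
    _ ≤ _ := h
    _ = _ := by ring

section Mgf

variable {Ω : Type*} [MeasurableSpace Ω] {P : Measure Ω} [IsProbabilityMeasure P]
  {Y : Ω → ℝ} {a b μ : ℝ}

lemma mgf_le_of_mem_Icc (hab : a < b) (hm : AEMeasurable Y P)
    (hb : ∀ᵐ ω ∂P, Y ω ∈ Set.Icc a b) (hmean : ∫ ω, Y ω ∂P = μ) (t : ℝ) :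
    mgf Y P t ≤ ((b - μ) * exp (t * a) + (μ - a) * exp (t * b)) / (b - a) := by
  have hint : Integrable Y P := Integrable.of_mem_Icc a b hm hb
  calc mgf Y P t
      ≤ ∫ ω, ((b - Y ω) * exp (t * a) + (Y ω - a) * exp (t * b)) / (b - a) ∂P :=
        integral_mono_ae (integrable_exp_mul_of_mem_Icc hm hb) (by fun_prop)
          (hb.mono fun ω hω => exp_mul_le_of_mem_Icc hab hω t)
    _ = ((b - μ) * exp (t * a) + (μ - a) * exp (t * b)) / (b - a) := by
        rw [integral_div, integral_add (by fun_prop) (by fun_prop), integral_mul_const,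
          integral_mul_const, integral_sub (by fun_prop) hint, integral_sub hint (by fun_prop)]
        simp [hmean]

lemma le_integral_of_mem_Icc (hm : AEMeasurable Y P) (hb : ∀ᵐ ω ∂P, Y ω ∈ Set.Icc a b) :
    a ≤ ∫ ω, Y ω ∂P := by
  simpa using integral_mono_ae (integrable_const a) (Integrable.of_mem_Icc a b hm hb)
    (hb.mono fun ω hω => hω.1)

lemma mgf_le_exp_of_mem_Icc {u : ℝ} (hab : a < b) (hμu : μ ≤ u) (hu : u ≤ (a + b) / 2)
    (hm : AEMeasurable Y P) (hb : ∀ᵐ ω ∂P, Y ω ∈ Set.Icc a b) (hmean : ∫ ω, Y ω ∂P = μ)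
    {t : ℝ} (ht : t ≤ 0) :
    mgf Y P t ≤ exp (t * μ + t ^ 2 * ((u - a) * (b - u)) / 2) := by
  have hba : 0 < b - a := by linarith
  have haμ : a ≤ μ := hmean ▸ le_integral_of_mem_Icc hm hb
  set p := (μ - a) / (b - a) with hp
  set q := (u - a) / (b - a) with hq
  set s := t * (b - a) with hs
  have hp0 : 0 ≤ p := by positivity
  have hpq : p ≤ q := div_le_div_of_nonneg_right (by linarith) hba.le
  have hq2 : q ≤ 1 / 2 := by rw [div_le_iff₀ hba]; linarith
  calc mgf Y P t
      ≤ ((b - μ) * exp (t * a) + (μ - a) * exp (t * b)) / (b - a) :=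
        mgf_le_of_mem_Icc hab hm hb hmean t
    _ = exp (t * a + log (1 - p + p * exp s)) := by
        have hexp_tb : exp (t * b) = exp (t * a) * exp s := by rw [hs, ← exp_add]; ring_nf
        rw [exp_add, exp_log (one_sub_add_mul_exp_pos hp0 (by linarith) s), hexp_tb, hp]
        field_simp
        ring
    _ ≤ exp (t * a + (s * p + s ^ 2 * (q * (1 - q)) / 2)) := by
        gcongr
        exact log_one_sub_add_mul_exp_le hp0 hpq hq2 (mul_nonpos_of_nonpos_of_nonneg ht hba.le)
    _ = exp (t * μ + t ^ 2 * ((u - a) * (b - u)) / 2) := by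
        rw [hp, hq, hs]
        congr 1
        field_simp
        ring

end Mgf

lemma measureReal_sum_le_le_exp_of_iIndepFun {Ω ι : Type*} [MeasurableSpace Ω] {P : Measure Ω}
    [IsProbabilityMeasure P] [Fintype ι] {X : ι → Ω → ℝ} (hindep : iIndepFun X P)
    (hmeas : ∀ i, Measurable (X i)) {t c : ℝ} (ht : t ≤ 0)
    (hint : ∀ i, Integrable (fun ω => exp (t * X i ω)) P) (hmgf : ∀ i, mgf (X i) P t ≤ exp c)
    (x : ℝ) : P.real {ω | ∑ i, X i ω ≤ x} ≤ exp (-t * x + Fintype.card ι * c) := by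
  have hmgf_sum : mgf (∑ i, X i) P t ≤ exp c ^ Fintype.card ι := by
    rw [hindep.mgf_sum hmeas, ← Finset.card_univ, ← Finset.prod_const]
    exact Finset.prod_le_prod (fun i _ => mgf_nonneg) (fun i _ => hmgf i)
  calc P.real {ω | ∑ i, X i ω ≤ x}
      ≤ exp (-t * x) * mgf (∑ i, X i) P t := by
        simpa using measure_le_le_exp_mul_mgf x ht
          (hindep.integrable_exp_mul_sum hmeas fun i _ => hint i)
    _ ≤ exp (-t * x) * exp c ^ Fintype.card ι := by gcongr
    _ = exp (-t * x + Fintype.card ι * c) := by rw [← exp_nat_mul, exp_add]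

theorem lower_tail_bound_low_upper_bound_general
    {Ω : Type*} [MeasurableSpace Ω] (P : Measure Ω) [IsProbabilityMeasure P]
    (a b l u μ : ℝ) (hab : a < b) (hal : a ≤ l)
    (hu : u ≤ (a + b) / 2)
    (n : ℕ) (X : Fin n → Ω → ℝ)
    (hmeas : ∀ i, Measurable (X i))
    (hindep : ProbabilityTheory.iIndepFun X P)
    (hbdd : ∀ i, ∀ᵐ ω ∂P, X i ω ∈ Set.Icc a b)
    (hmean : ∀ i, ∫ ω, X i ω ∂P = μ)
    (hμu : μ ≤ u)
    (ε : ℝ) (hε : ε ∈ Set.Icc 0 (u - l)) :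
    (P {ω | (∑ i, X i ω) / n - μ ≤ -ε}).toReal ≤
      Real.exp (-((n : ℝ) * ε ^ 2) / (2 * (u - a) * (b - u))) := by
  rcases n.eq_zero_or_pos with rfl | hn
  · simpa [measureReal_def] using measureReal_le_one
  rcases hε.1.eq_or_lt with rfl | hε0
  · simpa [measureReal_def] using measureReal_le_one
  have hv : 0 < (u - a) * (b - u) := mul_pos (by linarith [hε.2]) (by linarith)
  set t := -ε / ((u - a) * (b - u)) with ht_def
  have ht : t ≤ 0 := div_nonpos_of_nonpos_of_nonneg (by linarith) hv.le
  have hevent : {ω | (∑ i, X i ω) / n - μ ≤ -ε} = {ω | ∑ i, X i ω ≤ n * (μ - ε)} := by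
    ext ω
    rw [Set.mem_ofPred_eq, Set.mem_ofPred_eq, sub_le_iff_le_add, div_le_iff₀ (by positivity)]
    ring_nf
  calc (P {ω | (∑ i, X i ω) / n - μ ≤ -ε}).toReal
      = P.real {ω | ∑ i, X i ω ≤ n * (μ - ε)} := by rw [hevent, measureReal_def]
    _ ≤ exp (-t * (n * (μ - ε)) +
          Fintype.card (Fin n) * (t * μ + t ^ 2 * ((u - a) * (b - u)) / 2)) :=
        measureReal_sum_le_le_exp_of_iIndepFun hindep hmeas ht
          (fun i => integrable_exp_mul_of_mem_Icc (hmeas i).aemeasurable (hbdd i))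
          (fun i => mgf_le_exp_of_mem_Icc hab hμu hu (hmeas i).aemeasurable (hbdd i) (hmean i) ht)
          _
    _ = exp (-((n : ℝ) * ε ^ 2) / (2 * (u - a) * (b - u))) := by
        rw [Fintype.card_fin, ht_def]
        congr 1
        field_simp
        ring

/-- Improved Chernoff-Hoeffding lower-tail bound when `u ≤ (a+b)/2`. -/
theorem lower_tail_bound_low_upper_bound
    {Ω : Type*} [MeasurableSpace Ω] (P : Measure Ω) [IsProbabilityMeasure P]
    (a b l u μ : ℝ) (hab : a < b) (hal : a ≤ l) (hlu : l ≤ u) (hub : u ≤ b)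
    (hu : u ≤ (a + b) / 2)
    (n : ℕ) (hn : 0 < n) (X : Fin n → Ω → ℝ)
    (hmeas : ∀ i, Measurable (X i))
    (hindep : ProbabilityTheory.iIndepFun X P)
    (hident : ∀ i j, ProbabilityTheory.IdentDistrib (X i) (X j) P P)
    (hbdd : ∀ i, ∀ᵐ ω ∂P, X i ω ∈ Set.Icc a b)
    (hmean : ∀ i, ∫ ω, X i ω ∂P = μ)
    (hlμ : l ≤ μ) (hμu : μ ≤ u)
    (ε : ℝ) (hε : ε ∈ Set.Icc 0 (u - l)) :
    (P {ω | (∑ i, X i ω) / n - μ ≤ -ε}).toReal ≤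
      Real.exp (-((n : ℝ) * ε ^ 2) / (2 * (u - a) * (b - u))) :=
  lower_tail_bound_low_upper_bound_general P a b l u μ hab hal hu n X hmeas hindep hbdd hmean hμu ε
    hε
end

section
/- Let a < b be real numbers and let X be a random variable taking values in [a,b] with mean μ satisfying l ≤ μ ≤ u, where a ≤ l ≤ u ≤ b. Let θ_u = (u−a)/(b−a). If s ≥ 0 satisfies θ_u ≤ 1/(1 + exp(s(b−a))), then E[exp(s(X−μ))] ≤ exp((s²(b−a)²/2) · φ''_{θ_u}(s(b−a))), where φ''_θ(r) = θ(1−θ)e^r / (1−θ+θe^r)². -/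
/-
Hoeffding's convexity argument bounds `exp (s (x - μ))` on `[a, b]` by its chord, which gives
`E[exp (s (X - μ))] ≤ exp (φ_θ (s (b - a)))` with `θ = (μ - a) / (b - a) ≤ θ_u`. As
`φ_θ(0) = φ_θ'(0) = 0`, it suffices to bound `φ_θ''` on `[0, s (b - a)]` by `φ_{θ_u}''(s (b - a))`.
Now `φ_θ'' = p (1 - p)`, where `p` is the mean of the exponentially tilted Bernoulli(θ) law; `p`
increases in `θ` and in the tilt, and the hypothesis on `θ_u` says exactly that `p ≤ 1/2` at
`(θ_u, s (b - a))`, where `p (1 - p)` is increasing.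
-/

open MeasureTheory

/-- `φ''_θ(r) = θ(1-θ)e^r / (1-θ+θe^r)^2`, the second derivative of
`φ_θ(r) = -θr + log(1-θ+θe^r)`. -/
noncomputable def phiSecond (θ r : ℝ) : ℝ :=
  θ * (1 - θ) * Real.exp r / (1 - θ + θ * Real.exp r) ^ 2

open Real Set

noncomputable def phi (θ r : ℝ) : ℝ := -θ * r + log (1 - θ + θ * exp r)

/-- The mean of the Bernoulli(θ) law tilted by `exp (r x)`; `φ_θ' = tilt θ - θ` and
`φ_θ'' = tilt θ (1 - tilt θ)`. -/
noncomputable def tilt (θ r : ℝ) : ℝ := θ * exp r / (1 - θ + θ * exp r)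

lemma le_mul_sq_div_two_of_deriv2_le {g g' g'' : ℝ → ℝ} {M r : ℝ}
    (hg : ∀ x, HasDerivAt g (g' x) x) (hg' : ∀ x, HasDerivAt g' (g'' x) x)
    (h0 : g 0 = 0) (h0' : g' 0 = 0) (hM : ∀ x ∈ Ico 0 r, g'' x ≤ M) :
    ∀ x ∈ Icc 0 r, g x ≤ M * x ^ 2 / 2 := by
  have hcont {f f' : ℝ → ℝ} (hf : ∀ x, HasDerivAt f (f' x) x) : ContinuousOn f (Icc 0 r) :=
    fun x _ => (hf x).continuousAt.continuousWithinAt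
  have hslope : ∀ x ∈ Icc 0 r, g' x ≤ M * x := by
    have hMx (x : ℝ) : HasDerivAt (fun x => M * x) M x := by
      simpa using (hasDerivAt_id x).const_mul M
    refine image_le_of_deriv_right_le_deriv_boundary (hcont hg')
      (fun x _ => (hg' x).hasDerivWithinAt) (by simp [h0']) (hcont hMx)
      (fun x _ => (hMx x).hasDerivWithinAt) hM
  have hB (x : ℝ) : HasDerivAt (fun x => M * x ^ 2 / 2) (M * x) x := by
    refine (((hasDerivAt_pow 2 x).const_mul M).div_const 2).congr_deriv ?_
    push_cast
    ring
  exact image_le_of_deriv_right_le_deriv_boundary (hcont hg)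
    (fun x _ => (hg x).hasDerivWithinAt) (by simp [h0]) (hcont hB)
    (fun x _ => (hB x).hasDerivWithinAt) fun x hx => hslope x (Ico_subset_Icc_self hx)

section Bernoulli

variable {θ θ' x y r : ℝ}

lemma one_sub_add_mul_exp_pos_s5 (h0 : 0 ≤ θ) (h1 : θ ≤ 1) (r : ℝ) :
    0 < 1 - θ + θ * exp r := by
  rcases h1.lt_or_eq with h1 | rfl
  · positivity
  · simpa using exp_pos r

lemma hasDerivAt_phi (h0 : 0 ≤ θ) (h1 : θ ≤ 1) (r : ℝ) :
    HasDerivAt (phi θ) (tilt θ r - θ) r := by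
  have hD : HasDerivAt (fun z => 1 - θ + θ * exp z) (θ * exp r) r := by
    simpa using ((hasDerivAt_exp r).const_mul θ).const_add (1 - θ)
  refine (((hasDerivAt_id r).const_mul (-θ)).add
    (hD.log (one_sub_add_mul_exp_pos_s5 h0 h1 r).ne') :).congr_deriv ?_
  rw [tilt]
  ring

lemma hasDerivAt_tilt (h0 : 0 ≤ θ) (h1 : θ ≤ 1) (r : ℝ) :
    HasDerivAt (tilt θ) (phiSecond θ r) r := by
  have hD : HasDerivAt (fun z => 1 - θ + θ * exp z) (θ * exp r) r := by
    simpa using ((hasDerivAt_exp r).const_mul θ).const_add (1 - θ)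
  have hpos := one_sub_add_mul_exp_pos_s5 h0 h1 r
  refine (((hasDerivAt_exp r).const_mul θ).div hD hpos.ne' :).congr_deriv ?_
  rw [phiSecond]
  field_simp
  ring

lemma phiSecond_eq_tilt_mul (h0 : 0 ≤ θ) (h1 : θ ≤ 1) (r : ℝ) :
    phiSecond θ r = tilt θ r * (1 - tilt θ r) := by
  have := (one_sub_add_mul_exp_pos_s5 h0 h1 r).ne'
  rw [phiSecond, tilt]
  field_simp
  ring

lemma tilt_le_tilt (h0 : 0 ≤ θ) (hθ : θ ≤ θ') (h1 : θ' ≤ 1) (hxy : x ≤ y) :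
    tilt θ x ≤ tilt θ' y := by
  have hx := one_sub_add_mul_exp_pos_s5 h0 (hθ.trans h1) x
  have hy := one_sub_add_mul_exp_pos_s5 (h0.trans hθ) h1 y
  have hexy := exp_le_exp.2 hxy
  rw [tilt, tilt, div_le_div_iff₀ hx hy]
  nlinarith [exp_pos x, mul_nonneg (mul_nonneg h0 (sub_nonneg.2 h1)) (sub_nonneg.2 hexy),
    mul_nonneg (sub_nonneg.2 hθ) (exp_pos x).le, mul_nonneg (sub_nonneg.2 hθ) (exp_pos y).le]

lemma tilt_le_half (h0 : 0 ≤ θ) (h : θ ≤ 1 / (1 + exp r)) : tilt θ r ≤ 1 / 2 := by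
  have hpos : 0 < 1 + exp r := by positivity
  have h' : θ * (1 + exp r) ≤ 1 := by rwa [le_div_iff₀ hpos] at h
  have h1 : θ ≤ 1 := by nlinarith [exp_pos r]
  rw [tilt, div_le_iff₀ (one_sub_add_mul_exp_pos_s5 h0 h1 r)]
  linarith

lemma phiSecond_le_phiSecond (h0 : 0 ≤ θ) (hθ : θ ≤ θ') (hxy : x ≤ y)
    (hθ' : θ' ≤ 1 / (1 + exp y)) : phiSecond θ x ≤ phiSecond θ' y := by
  have h1 : θ' ≤ 1 := hθ'.trans (div_le_one_of_le₀ (by linarith [exp_pos y]) (by positivity))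
  have hpq := tilt_le_tilt h0 hθ h1 hxy
  have hq := tilt_le_half (h0.trans hθ) hθ'
  rw [phiSecond_eq_tilt_mul h0 (hθ.trans h1), phiSecond_eq_tilt_mul (h0.trans hθ) h1]
  nlinarith

lemma phi_le_sq_div_two_mul_phiSecond (h0 : 0 ≤ θ) (hθ : θ ≤ θ') (hr : 0 ≤ r)
    (hθ' : θ' ≤ 1 / (1 + exp r)) : phi θ r ≤ r ^ 2 / 2 * phiSecond θ' r := by
  have h1 : θ ≤ 1 :=
    hθ.trans (hθ'.trans (div_le_one_of_le₀ (by linarith [exp_pos r]) (by positivity)))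
  have := le_mul_sq_div_two_of_deriv2_le (hasDerivAt_phi h0 h1)
    (fun x => (hasDerivAt_tilt h0 h1 x).sub_const θ) (by simp [phi]) (by simp [tilt])
    (fun x hx => phiSecond_le_phiSecond h0 hθ hx.2.le hθ') r ⟨hr, le_rfl⟩
  linarith

end Bernoulli

lemma exp_mul_le_chord {a b x : ℝ} (hab : a < b) (hx : x ∈ Icc a b) (t : ℝ) :
    exp (t * x) ≤ ((b - x) * exp (t * a) + (x - a) * exp (t * b)) / (b - a) := by
  have hba : 0 < b - a := sub_pos.2 hab
  have hconv := convexOn_exp.2 (mem_univ (t * a)) (mem_univ (t * b))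
    (div_nonneg (sub_nonneg.2 hx.2) hba.le) (div_nonneg (sub_nonneg.2 hx.1) hba.le)
    (by field_simp; ring)
  calc exp (t * x)
      = exp (((b - x) / (b - a)) • (t * a) + ((x - a) / (b - a)) • (t * b)) := by
        simp only [smul_eq_mul]
        congr 1
        field_simp
        ring
    _ ≤ _ := hconv
    _ = _ := by
        simp only [smul_eq_mul]
        field_simp

lemma exp_phi_eq {a b m : ℝ} (hab : a < b) (hm : m ∈ Icc a b) (s : ℝ) :
    exp (phi ((m - a) / (b - a)) (s * (b - a))) =
      exp (-(s * m)) * (((b - m) * exp (s * a) + (m - a) * exp (s * b)) / (b - a)) := by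
  have hba : 0 < b - a := sub_pos.2 hab
  have hθ0 : 0 ≤ (m - a) / (b - a) := div_nonneg (sub_nonneg.2 hm.1) hba.le
  have hθ1 : (m - a) / (b - a) ≤ 1 := (div_le_one hba).2 (by linarith [hm.2])
  have hexp : -((m - a) / (b - a)) * (s * (b - a)) = s * a - s * m := by field_simp; ring
  rw [phi, exp_add, exp_log (one_sub_add_mul_exp_pos_s5 hθ0 hθ1 _), hexp,
    show s * (b - a) = s * b - s * a by ring, exp_sub, exp_sub, exp_neg]
  field_simp
  ring

section Probability

variable {Ω : Type*} [MeasurableSpace Ω] {P : Measure Ω} [IsProbabilityMeasure P]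
  {X : Ω → ℝ} {a b : ℝ}

lemma integral_mem_Icc_of_ae_mem_Icc (hX : AEMeasurable X P) (hbdd : ∀ᵐ ω ∂P, X ω ∈ Icc a b) :
    ∫ ω, X ω ∂P ∈ Icc a b := by
  have hXint : Integrable X P := .of_mem_Icc a b hX hbdd
  constructor
  · simpa using integral_mono_ae (integrable_const a) hXint (hbdd.mono fun _ h => h.1)
  · simpa using integral_mono_ae hXint (integrable_const b) (hbdd.mono fun _ h => h.2)

lemma integral_exp_mul_le_chord (hX : AEMeasurable X P) (hab : a < b)
    (hbdd : ∀ᵐ ω ∂P, X ω ∈ Icc a b) (t : ℝ) :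
    ∫ ω, exp (t * X ω) ∂P ≤
      ((b - ∫ ω, X ω ∂P) * exp (t * a) + (∫ ω, X ω ∂P - a) * exp (t * b)) / (b - a) := by
  have hXint : Integrable X P := .of_mem_Icc a b hX hbdd
  calc ∫ ω, exp (t * X ω) ∂P
      ≤ ∫ ω, ((b - X ω) * exp (t * a) + (X ω - a) * exp (t * b)) / (b - a) ∂P :=
        integral_mono_ae (ProbabilityTheory.integrable_exp_mul_of_mem_Icc hX hbdd) (by fun_prop)
          (hbdd.mono fun _ hω => exp_mul_le_chord hab hω t)
    _ = _ := by
        rw [integral_div, integral_add (by fun_prop) (by fun_prop), integral_mul_const,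
          integral_mul_const, integral_sub (integrable_const b) hXint,
          integral_sub hXint (integrable_const a)]
        simp

lemma integral_exp_mul_sub_integral_le_exp_phi (hX : AEMeasurable X P) (hab : a < b)
    (hbdd : ∀ᵐ ω ∂P, X ω ∈ Icc a b) (s : ℝ) :
    ∫ ω, exp (s * (X ω - ∫ ω, X ω ∂P)) ∂P ≤
      exp (phi ((∫ ω, X ω ∂P - a) / (b - a)) (s * (b - a))) := by
  set m := ∫ ω, X ω ∂P
  calc ∫ ω, exp (s * (X ω - m)) ∂P = exp (-(s * m)) * ∫ ω, exp (s * X ω) ∂P := by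
        rw [← integral_const_mul]
        simp only [← exp_add, mul_sub, neg_add_eq_sub]
    _ ≤ exp (-(s * m)) * (((b - m) * exp (s * a) + (m - a) * exp (s * b)) / (b - a)) :=
        mul_le_mul_of_nonneg_left (integral_exp_mul_le_chord hX hab hbdd s) (exp_pos _).le
    _ = _ := (exp_phi_eq hab (integral_mem_Icc_of_ae_mem_Icc hX hbdd) s).symm

end Probability

theorem mgf_bound_low_theta_general
    {Ω : Type*} [MeasurableSpace Ω] (P : Measure Ω) [IsProbabilityMeasure P]
    (a b u μ : ℝ) (hab : a < b)
    (X : Ω → ℝ) (hmeas : Measurable X)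
    (hbdd : ∀ᵐ ω ∂P, X ω ∈ Set.Icc a b)
    (hmean : ∫ ω, X ω ∂P = μ)
    (hμu : μ ≤ u)
    (s : ℝ) (hs : 0 ≤ s)
    (hθ : (u - a) / (b - a) ≤ 1 / (1 + Real.exp (s * (b - a)))) :
    ∫ ω, Real.exp (s * (X ω - μ)) ∂P ≤
      Real.exp (s ^ 2 * (b - a) ^ 2 / 2 * phiSecond ((u - a) / (b - a)) (s * (b - a))) := by
  subst hmean
  have hba : 0 < b - a := sub_pos.2 hab
  have hμ := integral_mem_Icc_of_ae_mem_Icc hmeas.aemeasurable hbdd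
  calc ∫ ω, exp (s * (X ω - ∫ ω, X ω ∂P)) ∂P
      ≤ exp (phi ((∫ ω, X ω ∂P - a) / (b - a)) (s * (b - a))) :=
        integral_exp_mul_sub_integral_le_exp_phi hmeas.aemeasurable hab hbdd s
    _ ≤ exp ((s * (b - a)) ^ 2 / 2 * phiSecond ((u - a) / (b - a)) (s * (b - a))) :=
        exp_le_exp.2 <| phi_le_sq_div_two_mul_phiSecond (div_nonneg (sub_nonneg.2 hμ.1) hba.le)
          (div_le_div_of_nonneg_right (by linarith) hba.le) (by positivity) hθ
    _ = _ := by ring_nf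

/-- MGF bound for a bounded random variable when `θ_u = (u-a)/(b-a)` satisfies
`θ_u ≤ 1/(1 + exp(s(b-a)))`. -/
theorem mgf_bound_low_theta
    {Ω : Type*} [MeasurableSpace Ω] (P : Measure Ω) [IsProbabilityMeasure P]
    (a b l u μ : ℝ) (hab : a < b) (hal : a ≤ l) (hlu : l ≤ u) (hub : u ≤ b)
    (X : Ω → ℝ) (hmeas : Measurable X)
    (hbdd : ∀ᵐ ω ∂P, X ω ∈ Set.Icc a b)
    (hmean : ∫ ω, X ω ∂P = μ)
    (hlμ : l ≤ μ) (hμu : μ ≤ u)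
    (s : ℝ) (hs : 0 ≤ s)
    (hθ : (u - a) / (b - a) ≤ 1 / (1 + Real.exp (s * (b - a)))) :
    ∫ ω, Real.exp (s * (X ω - μ)) ∂P ≤
      Real.exp (s ^ 2 * (b - a) ^ 2 / 2 * phiSecond ((u - a) / (b - a)) (s * (b - a))) :=
  mgf_bound_low_theta_general P a b u μ hab X hmeas hbdd hmean hμu s hs hθ
end

section
/- For every θ ∈ [1/2, 1) and every r ≥ 0, it holds that −θr + log(1−θ+θe^r) ≤ θ(1−θ)r²/2. -/
/-!
With `φ(r) = -θr + log(1-θ+θeʳ)` we have `φ(0) = φ'(0) = 0` and `φ'' = q(1-q)`, where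
`q(r) = θeʳ/(1-θ+θeʳ)` is the mean of the Bernoulli(θ) law tilted by `eʳ`. For `r ≥ 0` the tilt
only raises the mean, so `θ ≤ q`, and then `θ(1-θ) - q(1-q) = (q-θ)(q+θ-1) ≥ 0` because
`θ ≥ 1/2`. Integrating `φ'' ≤ θ(1-θ)` twice from `0` gives the bound.
-/

open Real Set

theorem le_quadratic_of_second_deriv_le {f f' f'' : ℝ → ℝ} {c r : ℝ} (hr : 0 ≤ r)
    (hf : ∀ x ∈ Icc 0 r, HasDerivAt f (f' x) x) (hf' : ∀ x ∈ Icc 0 r, HasDerivAt f' (f'' x) x)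
    (hc : ∀ x ∈ Ico 0 r, f'' x ≤ c) :
    f r ≤ f 0 + f' 0 * r + c * r ^ 2 / 2 := by
  have hslope : ∀ x ∈ Icc 0 r, f' x ≤ f' 0 + c * x := by
    refine image_le_of_deriv_right_le_deriv_boundary (f' := f'') (B := fun x ↦ f' 0 + c * x)
      (fun x hx ↦ (hf' x hx).continuousAt.continuousWithinAt)
      (fun x hx ↦ (hf' x (Ico_subset_Icc_self hx)).hasDerivWithinAt) (by simp)
      (by fun_prop) (fun x _ ↦ ?_) hc
    exact ((((hasDerivAt_id x).const_mul c).const_add (f' 0)).congr_deriv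
      (mul_one c)).hasDerivWithinAt
  refine image_le_of_deriv_right_le_deriv_boundary (f' := f')
    (B := fun x ↦ f 0 + f' 0 * x + c * x ^ 2 / 2)
    (fun x hx ↦ (hf x hx).continuousAt.continuousWithinAt)
    (fun x hx ↦ (hf x (Ico_subset_Icc_self hx)).hasDerivWithinAt) (by simp)
    (by fun_prop) (fun x _ ↦ ?_) (fun x hx ↦ hslope x (Ico_subset_Icc_self hx)) ⟨hr, le_rfl⟩
  refine ((((hasDerivAt_id x).const_mul (f' 0)).const_add (f 0)).add
    (((hasDerivAt_pow 2 x).const_mul c).div_const 2)).hasDerivWithinAt.congr_deriv ?_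
  norm_num
  ring

noncomputable def tiltedMean (θ x : ℝ) : ℝ := θ * exp x / (1 - θ + θ * exp x)

section tiltedMean

variable {θ : ℝ}

theorem bernoulli_mgf_pos (hθ : θ ∈ Icc (0 : ℝ) 1) (x : ℝ) : 0 < 1 - θ + θ * exp x := by
  rcases hθ.1.lt_or_eq with hθ0 | rfl
  · nlinarith [hθ.2, exp_pos x]
  · simp

theorem hasDerivAt_log_bernoulli_mgf (hθ : θ ∈ Icc (0 : ℝ) 1) (x : ℝ) :
    HasDerivAt (fun x ↦ log (1 - θ + θ * exp x)) (tiltedMean θ x) x :=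
  (((hasDerivAt_exp x).const_mul θ).const_add (1 - θ)).log (bernoulli_mgf_pos hθ x).ne'

theorem hasDerivAt_tiltedMean (hθ : θ ∈ Icc (0 : ℝ) 1) (x : ℝ) :
    HasDerivAt (tiltedMean θ) (tiltedMean θ x * (1 - tiltedMean θ x)) x := by
  have hD := (bernoulli_mgf_pos hθ x).ne'
  refine (((hasDerivAt_exp x).const_mul θ).div
    (((hasDerivAt_exp x).const_mul θ).const_add (1 - θ)) hD).congr_deriv ?_
  simp only [tiltedMean]
  field_simp

theorem le_tiltedMean (hθ : θ ∈ Icc (0 : ℝ) 1) {x : ℝ} (hx : 0 ≤ x) : θ ≤ tiltedMean θ x := by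
  rw [tiltedMean, le_div_iff₀ (bernoulli_mgf_pos hθ x)]
  nlinarith [one_le_exp hx, mul_nonneg hθ.1 (sub_nonneg.2 hθ.2)]

end tiltedMean

/-- Sharpened Hoeffding-lemma exponent bound for `θ ≥ 1/2`:
`-θr + log(1-θ+θe^r) ≤ θ(1-θ)r²/2`. -/
theorem phi_le_of_half_le_theta (θ r : ℝ) (hθ : θ ∈ Set.Ico (1 / 2 : ℝ) 1) (hr : 0 ≤ r) :
    -θ * r + Real.log (1 - θ + θ * Real.exp r) ≤ θ * (1 - θ) * r ^ 2 / 2 := by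
  have hθ01 : θ ∈ Icc (0 : ℝ) 1 := ⟨by linarith [hθ.1], hθ.2.le⟩
  have hφ (x : ℝ) : HasDerivAt (fun x ↦ -θ * x + log (1 - θ + θ * exp x))
      (tiltedMean θ x - θ) x := by
    refine (((hasDerivAt_id x).const_mul (-θ)).add
      (hasDerivAt_log_bernoulli_mgf hθ01 x)).congr_deriv ?_
    ring
  have hφ' (x : ℝ) : HasDerivAt (fun x ↦ tiltedMean θ x - θ)
      (tiltedMean θ x * (1 - tiltedMean θ x)) x :=
    (hasDerivAt_tiltedMean hθ01 x).sub_const θ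
  have hcurv : ∀ x ∈ Ico 0 r, tiltedMean θ x * (1 - tiltedMean θ x) ≤ θ * (1 - θ) := by
    intro x hx
    have hq := le_tiltedMean hθ01 hx.1
    have hqθ : 0 ≤ tiltedMean θ x + θ - 1 := by linarith [hθ.1]
    nlinarith [mul_nonneg (sub_nonneg.2 hq) hqθ]
  have := le_quadratic_of_second_deriv_le hr (fun x _ ↦ hφ x) (fun x _ ↦ hφ' x) hcurv
  simpa [tiltedMean] using this
end

section
/- Fix a finite set U of hidden contexts with a probability mass function P on U, and K₀ ≥ 2 arms with mean rewards μ_{k,u} ∈ [0,1] for k ∈ {1,...,K₀}, u ∈ U. Suppose each u ∈ U has a unique best arm k*_u with value μ*_u = μ_{k*_u,u}, and that δ̄ satisfies μ*_u − μ_{k,u} ≤ δ̄ for all u ∈ U and all k ≠ k*_u. Define μ_k = ∑_{u∈U} μ_{k,u} P(u), p(k) = ∑_{u: k*_u = k} P(u), m(k) = ∑_{u: k*_u = k} μ*_u P(u), and K_>(k) = {k' ≠ k : m(k') > δ̄·p(k')}. Then for every arm k, μ_k ≥ m(k) + ∑_{k' ∈ K_>(k)} (m(k') − δ̄·p(k')).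 -/
open Finset

/-- Lower bound on the averaged mean of every arm from a confounded log
(Theorem: `μ_k ≥ m(k) + ∑_{k' ∈ K_>(k)} (m(k') - δ̄ p(k'))`). -/
theorem confounded_log_lower_bound
    {U : Type*} [Fintype U] (P : U → ℝ) (hP0 : ∀ u, 0 ≤ P u) (hP1 : ∑ u, P u = 1)
    (K₀ : ℕ) (hK : 2 ≤ K₀)
    (μ : Fin K₀ → U → ℝ) (hμ : ∀ k u, μ k u ∈ Set.Icc (0 : ℝ) 1)
    (kstar : U → Fin K₀)
    (hbest : ∀ u, ∀ k, k ≠ kstar u → μ k u < μ (kstar u) u)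
    (δbar : ℝ)
    (hgap : ∀ u, ∀ k, k ≠ kstar u → μ (kstar u) u - μ k u ≤ δbar)
    (p m : Fin K₀ → ℝ)
    (hp : ∀ k', p k' = ∑ u ∈ Finset.univ.filter (fun u => kstar u = k'), P u)
    (hm : ∀ k', m k' = ∑ u ∈ Finset.univ.filter (fun u => kstar u = k'), μ (kstar u) u * P u)
    (k : Fin K₀) :
    m k + ∑ k' ∈ Finset.univ.filter (fun k' => k' ≠ k ∧ δbar * p k' < m k'),
        (m k' - δbar * p k') ≤
      ∑ u, μ k u * P u := by
  classical
  set T : Fin K₀ → ℝ := fun k' => ∑ u ∈ Finset.univ.filter (fun u => kstar u = k'), μ k u * P u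
    with hT
  have hTnonneg : ∀ k', 0 ≤ T k' := fun k' =>
    Finset.sum_nonneg fun u _ => mul_nonneg (hμ k u).1 (hP0 u)
  have htotal : ∑ u, μ k u * P u = ∑ k', T k' := by
    rw [hT]
    exact (Finset.sum_fiberwise Finset.univ kstar (fun u => μ k u * P u)).symm
  have hTk : T k = m k := by
    rw [hm, hT]
    refine Finset.sum_congr rfl fun u hu => ?_
    have := (Finset.mem_filter.mp hu).2
    rw [this]
  have hTlb : ∀ k', k' ≠ k → m k' - δbar * p k' ≤ T k' := by
    intro k' hk'
    rw [hm, hp, hT, Finset.mul_sum, ← Finset.sum_sub_distrib]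
    refine Finset.sum_le_sum fun u hu => ?_
    have hu' : kstar u = k' := (Finset.mem_filter.mp hu).2
    have hkne : k ≠ kstar u := by rw [hu']; exact fun h => hk' h.symm
    have := hgap u k hkne
    nlinarith [hP0 u]
  rw [htotal, ← Finset.add_sum_erase _ T (Finset.mem_univ k), hTk]
  gcongr
  calc ∑ k' ∈ Finset.univ.filter (fun k' => k' ≠ k ∧ δbar * p k' < m k'),
        (m k' - δbar * p k')
      ≤ ∑ k' ∈ Finset.univ.filter (fun k' => k' ≠ k ∧ δbar * p k' < m k'), T k' := by
        refine Finset.sum_le_sum fun k' hk' => ?_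
        exact hTlb k' (Finset.mem_filter.mp hk').2.1
    _ ≤ ∑ k' ∈ Finset.univ.erase k, T k' := by
        refine Finset.sum_le_sum_of_subset_of_nonneg ?_ fun k' _ _ => hTnonneg k'
        intro k' hk'
        exact Finset.mem_erase.mpr ⟨(Finset.mem_filter.mp hk').2.1, Finset.mem_univ k'⟩
end

section
/- Fix a finite set U of hidden contexts with a probability mass function P on U, K₀ ≥ 2 arms with mean rewards μ_{k,u} ∈ [0,1], unique best arms k*_u with values μ*_u, and constants 0 < δ̲ ≤ δ̄ such that δ̲ ≤ μ*_u − μ_{k,u} ≤ δ̄ for all u and all k ≠ k*_u. Define p(k) = ∑_{u: k*_u = k} P(u) and μ̄ = ∑_{u∈U} μ*_u P(u). Then there exists an admissible instance μ'_{k,u} — that is, μ'_{k,u} ∈ [0,1] for all k,u, with μ'_{k*_u,u} = μ*_u, with k*_u still the unique best arm at each u, and with δ̲ ≤ μ*_u − μ'_{k,u} ≤ δ̄ for all u and k ≠ k*_u — satisfying ∑_{u∈U} μ'_{k,u} P(u) = μ̄ − δ̲·(1 − p(k)) simultaneously for all arms k. In particular, the upper bound u_k = μ̄ − δ̲(1−p(k))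 on the averaged arm means is tight. -/
open Finset

/-- Tightness of the upper bound from a confounded log: there exists an admissible
instance attaining `μ'_k = μ̄ - δ̲(1 - p(k))` simultaneously for all arms `k`. -/
theorem confounded_log_upper_bound_tight
    {U : Type*} [Fintype U] (P : U → ℝ) (hP0 : ∀ u, 0 ≤ P u) (hP1 : ∑ u, P u = 1)
    (K₀ : ℕ) (hK : 2 ≤ K₀)
    (μ : Fin K₀ → U → ℝ) (hμ : ∀ k u, μ k u ∈ Set.Icc (0 : ℝ) 1)
    (kstar : U → Fin K₀)
    (hbest : ∀ u, ∀ k, k ≠ kstar u → μ k u < μ (kstar u) u)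
    (δlo δhi : ℝ) (hδlo : 0 < δlo) (hδ : δlo ≤ δhi)
    (hgap : ∀ u, ∀ k, k ≠ kstar u →
      δlo ≤ μ (kstar u) u - μ k u ∧ μ (kstar u) u - μ k u ≤ δhi) :
    ∃ μ' : Fin K₀ → U → ℝ,
      (∀ k u, μ' k u ∈ Set.Icc (0 : ℝ) 1) ∧
      (∀ u, μ' (kstar u) u = μ (kstar u) u) ∧
      (∀ u, ∀ k, k ≠ kstar u → μ' k u < μ' (kstar u) u) ∧
      (∀ u, ∀ k, k ≠ kstar u →
        δlo ≤ μ (kstar u) u - μ' k u ∧ μ (kstar u) u - μ' k u ≤ δhi) ∧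
      (∀ k, ∑ u, μ' k u * P u =
        (∑ u, μ (kstar u) u * P u) -
          δlo * (1 - ∑ u ∈ Finset.univ.filter (fun u => kstar u = k), P u)) := by
  refine ⟨fun k u => if k = kstar u then μ (kstar u) u else μ (kstar u) u - δlo, ?_, ?_, ?_, ?_, ?_⟩
  · intro k u
    by_cases h : k = kstar u
    · simpa [h] using hμ (kstar u) u
    · simp only [h, if_false]
      -- use existence of some other arm to lower-bound μ* - δlo
      have hk := hgap u k h
      have h0 := (hμ k u).1
      have h1 := (hμ (kstar u) u).2
      constructor
      · linarith [hk.1]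
      · linarith
  · intro u; simp
  · intro u k h
    simp [h]
    linarith
  · intro u k h
    simp only [h, if_false, if_pos rfl]
    constructor <;> linarith
  · intro k
    have : ∀ u, (if k = kstar u then μ (kstar u) u else μ (kstar u) u - δlo) * P u
        = μ (kstar u) u * P u - (if kstar u = k then 0 else δlo * P u) := by
      intro u
      by_cases h : k = kstar u
      · simp [h]
      · have h' : ¬ kstar u = k := fun hh => h hh.symm
        simp [h, h']; ring
    simp only [this, Finset.sum_sub_distrib]
    congr 1
    rw [Finset.sum_ite, Finset.sum_const, smul_zero, zero_add, ← Finset.mul_sum]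
    have hsplit := Finset.sum_filter_add_sum_filter_not Finset.univ (fun u => kstar u = k) P
    rw [hP1] at hsplit
    have : ∑ u ∈ Finset.univ.filter (fun u => ¬ kstar u = k), P u
        = 1 - ∑ u ∈ Finset.univ.filter (fun u => kstar u = k), P u := by linarith
    rw [this]
end
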